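/- Every feasible and stable matching M of the constructed instance I' satisfies: (1) for each i ∈ [r], either M(x_i) = v and M(x̄_i) = b, or M(x̄_i) = v and M(x_i) = b; (2) M(d) = w; (3) every literal student over Y ∪ Ȳ is assigned to v; (4) for each j ∈ [s], d_j ∈ M(v) if and only if exactly two literal students corresponding to literals of C_j are assigned to v. -/

import Mathlib

open scoped Classical

noncomputable section

/-- An SMTI-Diverse instance: students `S`, colleges `C`, types `T`.
Preferences are encoded by rank functions (smaller rank = more preferred);
ties are allowed.  `acc` is the (symmetric) acceptability relation, `tau`
the 0/1 type vectors (encoded as `Bool`), `lq`/`uq` the lower/upper quota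
vectors and `cap` the capacities. -/
structure SMTI (S C T : Type) [Fintype S] [Fintype C] [Fintype T] where
  acc : S → C → Prop
  tau : S → T → Bool
  rankS : S → C → ℕ
  rankC : C → S → ℕ
  lq : C → T → ℕ
  uq : C → T → ℕ
  cap : C → ℕ

namespace SMTI

variable {S C T : Type} [Fintype S] [Fintype C] [Fintype T]

/-- `f : S → Option C` encodes a matching: every assigned college is acceptable. -/
def IsMatching (I : SMTI S C T) (f : S → Option C) : Prop :=
  ∀ u w, f u = some w → I.acc u w

/-- The set `M(w)` of students assigned to college `w`. -/
def assigned (I : SMTI S C T) (f : S → Option C) (w : C) : Finset S :=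
  Finset.univ.filter fun u => f u = some w

/-- The number of students of type `z` assigned to `w`. -/
def typeLoad (I : SMTI S C T) (f : S → Option C) (w : C) (z : T) : ℕ :=
  ∑ u ∈ I.assigned f w, (I.tau u z).toNat

/-- Feasibility: capacities respected and quotas met at all colleges. -/
def Feasible (I : SMTI S C T) (f : S → Option C) : Prop :=
  ∀ w, (I.assigned f w).card ≤ I.cap w ∧
    ∀ z, I.lq w z ≤ I.typeLoad f w z ∧ I.typeLoad f w z ≤ I.uq w z

/-- `u` strictly prefers `w` to its assigned college (in particular if unmatched). -/
def PrefersTo (I : SMTI S C T) (f : S → Option C) (u : S) (w : C) : Prop :=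
  ∀ w', f u = some w' → I.rankS u w < I.rankS u w'

/-- `{u,w}` is a blocking pair of `f` witnessed by `U' ⊆ M(w)`. -/
def BlocksWith (I : SMTI S C T) (f : S → Option C) (u : S) (w : C) (U' : Finset S) : Prop :=
  f u ≠ some w ∧ I.acc u w ∧ I.PrefersTo f u w ∧
  U' ⊆ I.assigned f w ∧
  (∀ u' ∈ U', I.rankC w u < I.rankC w u') ∧
  (I.assigned f w \ U').card + 1 ≤ I.cap w ∧
  ∀ z, I.lq w z ≤ (I.tau u z).toNat + ∑ u' ∈ I.assigned f w \ U', (I.tau u' z).toNat ∧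
    (I.tau u z).toNat + ∑ u' ∈ I.assigned f w \ U', (I.tau u' z).toNat ≤ I.uq w z

/-- `{u,w}` is a blocking pair of `f` (with some witness). -/
def BlockingPair (I : SMTI S C T) (f : S → Option C) (u : S) (w : C) : Prop :=
  ∃ U', I.BlocksWith f u w U'

/-- Stability: no blocking pair at all. -/
def Stable (I : SMTI S C T) (f : S → Option C) : Prop :=
  ∀ u w, ¬ I.BlockingPair f u w

end SMTI

section IPrimeConstruction

/-- A literal: polarity (`true` = positive) and a variable
(`Sum.inl i` = `x_{i+1} ∈ X`, `Sum.inr i` = `y ∈ Y`). -/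
abbrev XLit (r : ℕ) := Bool × (Fin r ⊕ Fin r)

/-- Students of `I'`: literal students `Sum.inl l`; clause students
`d_j = Sum.inr (Sum.inl j)`; special students `d = Sum.inr (Sum.inr 0)`,
`r1 = Sum.inr (Sum.inr 1)`, `r2 = Sum.inr (Sum.inr 2)`, `r3 = Sum.inr (Sum.inr 3)`. -/
abbrev StP (r s : ℕ) := XLit r ⊕ (Fin s ⊕ Fin 4)

/-- Colleges of `I'`: `v = 0`, `w = 1`, `a = 2`, `b = 3`. -/
abbrev ColP := Fin 4

/-- Types of `I'`: variable types (`X` on the left, `Y` on the right),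
clause types, and two special types. -/
abbrev TyP (r s : ℕ) := (Fin r ⊕ Fin r) ⊕ (Fin s ⊕ Fin 2)

/-- Truth value of a literal under assignments `σX`, `σY`. -/
def evalXLit {r : ℕ} (σX σY : Fin r → Bool) (l : XLit r) : Bool :=
  if l.1 then Sum.elim σX σY l.2 else !(Sum.elim σX σY l.2)

/-- Block index of a student in college `v`'s preference list:
`[D] ≻ d ≻ [Y] ≻ [Ȳ] ≻ [X̄] ≻ [X]`. -/
def blockV (r s : ℕ) : StP r s → ℕ
  | Sum.inr (Sum.inl _) => 0
  | Sum.inr (Sum.inr k) => if k = 0 then 1 else 9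
  | Sum.inl (pol, Sum.inr _) => if pol then 2 else 3
  | Sum.inl (pol, Sum.inl _) => if pol then 5 else 4

/-- Block index of a student in college `b`'s preference list:
`r3 ≻ r2 ≻ r1 ≻ [X] ≻ [X̄]`. -/
def blockB (r s : ℕ) : StP r s → ℕ
  | Sum.inr (Sum.inr k) => if k = 3 then 0 else if k = 2 then 1 else if k = 1 then 2 else 9
  | Sum.inl (pol, Sum.inl _) => if pol then 3 else 4
  | _ => 9

/-- `rk` realizes an "arbitrary fixed strict order within the blocks" given by `blk`. -/
def RealizesBlocks {r s : ℕ} (blk : StP r s → ℕ) (rk : StP r s → ℕ) : Prop :=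
  Function.Injective rk ∧ ∀ s1 s2 : StP r s, blk s1 < blk s2 → rk s1 < rk s2

/-- The quota vector of college `v`: `1^r 2^r 3^s 0 0` (both lower and upper). -/
def quotaV (r s : ℕ) : TyP r s → ℕ
  | Sum.inl (Sum.inl _) => 1
  | Sum.inl (Sum.inr _) => 2
  | Sum.inr (Sum.inl _) => 3
  | Sum.inr (Sum.inr _) => 0

/-- The instance `I'` from the Σ₂ᵖ-hardness construction, parameterized by the
clauses `cl` and by arbitrary fixed strict orders `rkV` (for `v`) and `rkB`
(for `b`) within the blocks. -/
def IPrime (r s : ℕ) (cl : Fin s → Fin 3 → XLit r) (rkV rkB : StP r s → ℕ) :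
    SMTI (StP r s) ColP (TyP r s) where
  acc := fun st c =>
    match st with
    | Sum.inl (_, Sum.inl _) => c = 0 ∨ c = 3        -- X-literal students: v and b
    | Sum.inl (_, Sum.inr _) => c = 0                -- Y-literal students: only v
    | Sum.inr (Sum.inl _) => c = 0                   -- clause students: only v
    | Sum.inr (Sum.inr k) =>
        if k = 0 then (c = 0 ∨ c = 1)                -- d: v and w
        else if k = 2 then (c = 1 ∨ c = 2 ∨ c = 3)   -- r2: b, w, a
        else (c = 2 ∨ c = 3)                         -- r1, r3: a and b
  tau := fun st t =>
    match st, t with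
    | Sum.inl l, Sum.inl vt => decide (l.2 = vt)
    | Sum.inl l, Sum.inr (Sum.inl j) => decide (∃ z : Fin 3, cl j z = l)
    | Sum.inl _, Sum.inr (Sum.inr _) => false
    | Sum.inr (Sum.inl _), Sum.inl _ => false
    | Sum.inr (Sum.inl j), Sum.inr (Sum.inl j') => decide (j = j')
    | Sum.inr (Sum.inl _), Sum.inr (Sum.inr _) => false
    | Sum.inr (Sum.inr k), Sum.inl _ => decide (k = 0)          -- d has all variable types
    | Sum.inr (Sum.inr k), Sum.inr (Sum.inl _) => decide (k = 0) -- d has all clause types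
    | Sum.inr (Sum.inr k), Sum.inr (Sum.inr z) =>
        -- special types: d : 00, r1 : 10, r2 : 11, r3 : 01
        if k = 1 then decide (z = 0)
        else if k = 2 then true
        else if k = 3 then decide (z = 1)
        else false
  rankS := fun st c =>
    match st with
    | Sum.inl (pol, Sum.inl _) =>
        -- x_i : v ≻ b ;  x̄_i : b ≻ v
        if pol then (if c = 0 then 0 else if c = 3 then 1 else 9)
        else (if c = 3 then 0 else if c = 0 then 1 else 9)
    | Sum.inl (_, Sum.inr _) => if c = 0 then 0 else 9
    | Sum.inr (Sum.inl _) => if c = 0 then 0 else 9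
    | Sum.inr (Sum.inr k) =>
        if k = 0 then (if c = 0 then 0 else if c = 1 then 1 else 9)       -- d : v ≻ w
        else if k = 1 then (if c = 3 then 0 else if c = 2 then 1 else 9)  -- r1 : b ≻ a
        else if k = 2 then
          (if c = 3 then 0 else if c = 1 then 1 else if c = 2 then 2 else 9) -- r2 : b ≻ w ≻ a
        else (if c = 2 then 0 else if c = 3 then 1 else 9)                -- r3 : a ≻ b
  rankC := fun c st =>
    if c = 0 then rkV st
    else if c = 1 then
      -- w : d ≻ r2
      (if st = Sum.inr (Sum.inr 0) then 0 else if st = Sum.inr (Sum.inr 2) then 1 else 9)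
    else if c = 2 then
      -- a : r1 ≻ r2 ≻ r3
      (if st = Sum.inr (Sum.inr 1) then 0 else if st = Sum.inr (Sum.inr 2) then 1
       else if st = Sum.inr (Sum.inr 3) then 2 else 9)
    else rkB st
  lq := fun c t =>
    if c = 0 then quotaV r s t
    else if c = 3 then (match t with | Sum.inl (Sum.inl _) => 1 | _ => 0)
    else 0
  uq := fun c t =>
    if c = 0 then quotaV r s t
    else if c = 1 then 1
    else if c = 2 then (match t with | Sum.inr (Sum.inr _) => 1 | _ => 0)
    else (match t with
          | Sum.inl (Sum.inl _) => 1
          | Sum.inl (Sum.inr _) => 0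
          | Sum.inr (Sum.inl _) => 1
          | Sum.inr (Sum.inr _) => 1)
  cap := fun c =>
    if c = 0 then 3 * r + s else if c = 1 then 1 else if c = 2 then 1 else r + 2

end IPrimeConstruction

/-!
At `v` the lower and upper quotas coincide, so for every type the number of its holders matched
to `v` is forced; at `b` each `X`-variable type is held by exactly one matched student. Once `d`
is known to sit at `w`, these counts give (1), (3) and (4) at once.

That `d` sits at `w` comes from the gadget `r1, r2, r3` and the two special types, of which `b`
tolerates one holder each. `r2` cannot be at `b`: then `r1, r3` are not at `b`, and either `r3`
is at `a` and the unmatched `r1` displaces it there, or `r3` is unmatched and displaces `r2` at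
`b`. Hence `b` has a free seat (one student per `X`-variable besides the `r`'s), which `r1` takes
unless it is at `b`; likewise `r3` is at `b`, since at `a` it would let `r2` displace `r1` at `b`.
Now `a` is empty unless `r2` is there, and `r3` would move to an empty `a`. Finally `r2 ∈ M(a)`
prefers `w`, so `w` must be occupied by `d`, the only other student `w` accepts.
-/

namespace SMTI

variable {S C T : Type} [Fintype S] [Fintype C] [Fintype T] (I : SMTI S C T)
  {f : S → Option C} {u u' : S} {w : C}

theorem mem_assigned : u ∈ I.assigned f w ↔ f u = some w := by
  simp [assigned]

theorem typeLoad_eq_sum_of_holders [DecidableEq C] {z : T} (E : Finset S)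
    (hE : ∀ u, I.tau u z = true ↔ u ∈ E) :
    I.typeLoad f w z = ∑ u ∈ E, if f u = some w then 1 else 0 := by
  rw [typeLoad, assigned, Finset.sum_filter, ← Finset.sum_subset (Finset.subset_univ E)]
  · refine Finset.sum_congr rfl fun u hu => ?_
    simp [(hE u).2 hu]
  · intro u _ hu
    simp [(hE u).not.2 hu]

theorem card_assigned_le_sum_typeLoad (Z : Finset T)
    (hZ : ∀ u, f u = some w → ∃ z ∈ Z, I.tau u z = true) :
    (I.assigned f w).card ≤ ∑ z ∈ Z, I.typeLoad f w z := by
  rw [Finset.card_eq_sum_ones]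
  simp only [typeLoad]
  rw [Finset.sum_comm]
  refine Finset.sum_le_sum fun u hu => ?_
  obtain ⟨z, hz, hτ⟩ := hZ u (I.mem_assigned.1 hu)
  calc 1 = (I.tau u z).toNat := by simp [hτ]
    _ ≤ ∑ z ∈ Z, (I.tau u z).toNat :=
      Finset.single_le_sum (f := fun z => (I.tau u z).toNat) (fun _ _ => Nat.zero_le _) hz

theorem PrefersTo.ne {I : SMTI S C T} (h : I.PrefersTo f u w) : f u ≠ some w :=
  fun hw => (h w hw).false

theorem blockingPair_of_vacancy (hfeas : I.Feasible f) (hacc : I.acc u w)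
    (hpref : I.PrefersTo f u w) (hcap : (I.assigned f w).card < I.cap w)
    (hload : ∀ z, I.tau u z = true → I.typeLoad f w z < I.uq w z) :
    I.BlockingPair f u w := by
  refine ⟨∅, hpref.ne, hacc, hpref, Finset.empty_subset _, by simp, by simpa using hcap,
    fun z => ?_⟩
  obtain ⟨hlq, huq⟩ := (hfeas w).2 z
  rw [Finset.sdiff_empty, ← typeLoad]
  cases hτ : I.tau u z
  · simpa using ⟨hlq, huq⟩
  · have := hload z hτ
    simp only [Bool.toNat_true]
    omega

theorem blockingPair_of_replace (hfeas : I.Feasible f) (hu' : f u' = some w)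
    (hacc : I.acc u w) (hpref : I.PrefersTo f u w) (hrank : I.rankC w u < I.rankC w u')
    (hup : ∀ z, I.tau u z = true → I.tau u' z = false → I.typeLoad f w z < I.uq w z)
    (hlow : ∀ z, I.tau u z = false → I.tau u' z = true → I.lq w z < I.typeLoad f w z) :
    I.BlockingPair f u w := by
  have hsub : {u'} ⊆ I.assigned f w := Finset.singleton_subset_iff.2 (I.mem_assigned.2 hu')
  refine ⟨{u'}, hpref.ne, hacc, hpref, hsub, by simpa using hrank, ?_, fun z => ?_⟩
  · have := Finset.card_sdiff_add_card_eq_card hsub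
    have := (hfeas w).1
    simp_all
  · obtain ⟨hlq, huq⟩ := (hfeas w).2 z
    have hsplit := Finset.sum_sdiff hsub (f := fun u => (I.tau u z).toNat)
    rw [Finset.sum_singleton, ← typeLoad] at hsplit
    cases hτ : I.tau u z <;> cases hτ' : I.tau u' z <;>
      simp only [hτ', Bool.toNat_true, Bool.toNat_false] at hsplit ⊢
    · omega
    · have := hlow z hτ hτ'
      omega
    · have := hup z hτ hτ'
      omega
    · omega

theorem blockingPair_of_preferred_to_all (hacc : I.acc u w) (hpref : I.PrefersTo f u w)
    (hrank : ∀ u', f u' = some w → I.rankC w u < I.rankC w u') (hcap : 0 < I.cap w)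
    (hload : ∀ z, I.lq w z ≤ (I.tau u z).toNat ∧ (I.tau u z).toNat ≤ I.uq w z) :
    I.BlockingPair f u w :=
  ⟨I.assigned f w, hpref.ne, hacc, hpref, subset_rfl,
    fun u' hu' => hrank u' (I.mem_assigned.1 hu'),
    by simpa [Nat.one_le_iff_ne_zero] using hcap.ne', by simpa using hload⟩

end SMTI

namespace IPrime

variable {r s : ℕ} {cl : Fin s → Fin 3 → XLit r} {rkV rkB : StP r s → ℕ}
  {f : StP r s → Option ColP}

local notation "I'" => IPrime r s cl rkV rkB
local notation "𝒅" => (Sum.inr (Sum.inr 0) : StP r s)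
local notation "𝒓₁" => (Sum.inr (Sum.inr 1) : StP r s)
local notation "𝒓₂" => (Sum.inr (Sum.inr 2) : StP r s)
local notation "𝒓₃" => (Sum.inr (Sum.inr 3) : StP r s)

theorem college_of_r1 (hM : (I').IsMatching f) {c : ColP} (h : f 𝒓₁ = some c) :
    c = 2 ∨ c = 3 := by
  simpa [IPrime] using hM _ _ h

theorem college_of_r2 (hM : (I').IsMatching f) {c : ColP} (h : f 𝒓₂ = some c) :
    c = 1 ∨ c = 2 ∨ c = 3 := by
  simpa [IPrime] using hM _ _ h

theorem college_of_r3 (hM : (I').IsMatching f) {c : ColP} (h : f 𝒓₃ = some c) :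
    c = 2 ∨ c = 3 := by
  simpa [IPrime] using hM _ _ h

theorem eq_d_or_r2_of_at_w (hM : (I').IsMatching f) {u : StP r s} (h : f u = some 1) :
    u = 𝒅 ∨ u = 𝒓₂ := by
  have := hM _ _ h
  rcases u with ⟨_, _ | _⟩ | _ | k
  all_goals try fin_cases k
  all_goals simp_all [IPrime]

theorem eq_r_of_at_a (hM : (I').IsMatching f) {u : StP r s} (h : f u = some 2) :
    u = 𝒓₁ ∨ u = 𝒓₂ ∨ u = 𝒓₃ := by
  have := hM _ _ h
  rcases u with ⟨_, _ | _⟩ | _ | k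
  all_goals try fin_cases k
  all_goals simp_all [IPrime]

theorem typeLoad_variable (c : ColP) (x : Fin r ⊕ Fin r) :
    (I').typeLoad f c (Sum.inl x) =
      (if f (Sum.inl (true, x)) = some c then 1 else 0) +
      (if f (Sum.inl (false, x)) = some c then 1 else 0) +
      (if f 𝒅 = some c then 1 else 0) := by
  rw [SMTI.typeLoad_eq_sum_of_holders _ {Sum.inl (true, x), Sum.inl (false, x), 𝒅}]
  · rw [Finset.sum_insert (by simp), Finset.sum_insert (by simp), Finset.sum_singleton, add_assoc]
  · rintro ((⟨_ | _, _⟩) | _ | k)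
    all_goals try fin_cases k
    all_goals simp [IPrime, eq_comm]

theorem typeLoad_clause {j : Fin s} (hinj : Function.Injective (cl j)) (c : ColP) :
    (I').typeLoad f c (Sum.inr (Sum.inl j)) =
      (Finset.univ.filter fun z : Fin 3 => f (Sum.inl (cl j z)) = some c).card +
      (if f (Sum.inr (Sum.inl j)) = some c then 1 else 0) +
      (if f 𝒅 = some c then 1 else 0) := by
  rw [SMTI.typeLoad_eq_sum_of_holders _
    (insert (Sum.inr (Sum.inl j)) (insert 𝒅 (Finset.univ.image fun z => Sum.inl (cl j z))))]
  · rw [Finset.sum_insert (by simp), Finset.sum_insert (by simp),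
      Finset.sum_image fun _ _ _ _ h => hinj (Sum.inl_injective h), Finset.card_filter]
    omega
  · rintro (l | _ | k)
    all_goals try fin_cases k
    all_goals simp [IPrime, eq_comm]

theorem typeLoad_special_zero (c : ColP) :
    (I').typeLoad f c (Sum.inr (Sum.inr 0)) =
      (if f 𝒓₁ = some c then 1 else 0) + (if f 𝒓₂ = some c then 1 else 0) := by
  rw [SMTI.typeLoad_eq_sum_of_holders _ {𝒓₁, 𝒓₂}]
  · rw [Finset.sum_insert (by simp), Finset.sum_singleton]
  · rintro ((⟨_ | _, _⟩) | _ | k)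
    all_goals try fin_cases k
    all_goals simp [IPrime]

theorem typeLoad_special_one (c : ColP) :
    (I').typeLoad f c (Sum.inr (Sum.inr 1)) =
      (if f 𝒓₂ = some c then 1 else 0) + (if f 𝒓₃ = some c then 1 else 0) := by
  rw [SMTI.typeLoad_eq_sum_of_holders _ {𝒓₂, 𝒓₃}]
  · rw [Finset.sum_insert (by simp), Finset.sum_singleton]
  · rintro ((⟨_ | _, _⟩) | _ | k)
    all_goals try fin_cases k
    all_goals simp [IPrime]

theorem typeLoad_v_eq_quota (hfeas : (I').Feasible f) (z : TyP r s) :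
    (I').typeLoad f 0 z = quotaV r s z :=
  le_antisymm (by simpa [IPrime] using ((hfeas 0).2 z).2)
    (by simpa [IPrime] using ((hfeas 0).2 z).1)

theorem typeLoad_b_xVar (hfeas : (I').Feasible f) (i : Fin r) :
    (I').typeLoad f 3 (Sum.inl (Sum.inl i)) = 1 :=
  le_antisymm (by simpa [IPrime] using ((hfeas 3).2 (Sum.inl (Sum.inl i))).2)
    (by simpa [IPrime] using ((hfeas 3).2 (Sum.inl (Sum.inl i))).1)

theorem card_assigned_b_le (hM : (I').IsMatching f) (hfeas : (I').Feasible f) :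
    ((I').assigned f 3).card ≤ r + (I').typeLoad f 3 (Sum.inr (Sum.inr 0)) +
      (I').typeLoad f 3 (Sum.inr (Sum.inr 1)) := by
  let Z : Finset (TyP r s) :=
    (Finset.univ.disjSum ∅).disjSum ((∅ : Finset (Fin s)).disjSum Finset.univ)
  have hZ : ∀ u, f u = some 3 → ∃ z ∈ Z, (I').tau u z = true := by
    intro u h
    have := hM _ _ h
    rcases u with ⟨_, i | _⟩ | _ | k
    · exact ⟨Sum.inl (Sum.inl i), by simp [Z], by simp [IPrime]⟩
    all_goals try fin_cases k
    all_goals simp_all [IPrime, Z]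
  refine ((I').card_assigned_le_sum_typeLoad _ hZ).trans ?_
  simp [Z, Finset.sum_disjSum, Fin.sum_univ_two, typeLoad_b_xVar hfeas, add_assoc]

theorem eq_special_type_of_tau {k : Fin 4} (hk : k ≠ 0) {z : TyP r s}
    (h : (I').tau (Sum.inr (Sum.inr k)) z = true) :
    z = Sum.inr (Sum.inr 0) ∨ z = Sum.inr (Sum.inr 1) := by
  rcases z with (_ | _) | (_ | t)
  all_goals try fin_cases t
  all_goals simp_all [IPrime]

theorem r1_r3_not_at_b_of_r2_at_b (hfeas : (I').Feasible f) (hr2 : f 𝒓₂ = some 3) :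
    f 𝒓₁ ≠ some 3 ∧ f 𝒓₃ ≠ some 3 := by
  have hsp0 := ((hfeas 3).2 (Sum.inr (Sum.inr 0))).2
  have hsp1 := ((hfeas 3).2 (Sum.inr (Sum.inr 1))).2
  rw [typeLoad_special_zero] at hsp0
  rw [typeLoad_special_one] at hsp1
  exact ⟨fun h => by simp [IPrime, h, hr2] at hsp0, fun h => by simp [IPrime, h, hr2] at hsp1⟩

theorem r2_not_at_b (hM : (I').IsMatching f) (hfeas : (I').Feasible f) (hstab : (I').Stable f)
    (hB : RealizesBlocks (blockB r s) rkB) : f 𝒓₂ ≠ some 3 := by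
  intro hr2
  obtain ⟨hr1, hr3⟩ := r1_r3_not_at_b_of_r2_at_b hfeas hr2
  by_cases hr3a : f 𝒓₃ = some 2
  · have hr1a : f 𝒓₁ ≠ some 2 := fun h => by
      have hcap : ((I').assigned f 2).card ≤ 1 := by simpa [IPrime] using (hfeas 2).1
      simpa using Finset.card_le_one.1 hcap _ ((I').mem_assigned.2 h) _ ((I').mem_assigned.2 hr3a)
    have hr1none : f 𝒓₁ = none := by
      rcases h : f 𝒓₁ with _ | c
      · rfl
      · rcases college_of_r1 hM h with rfl | rfl <;> simp_all
    refine hstab 𝒓₁ 2 ((I').blockingPair_of_replace hfeas hr3a (by simp [IPrime])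
      (by simp [SMTI.PrefersTo, hr1none]) (by simp [IPrime]) ?_ ?_)
    · intro z h1 h2
      rcases eq_special_type_of_tau (by decide) h1 with rfl | rfl
      · rw [typeLoad_special_zero]
        simp [IPrime, hr1a, hr2]
      · simp [IPrime] at h1
    · intro z h1 h2
      rcases eq_special_type_of_tau (by decide) h2 with rfl | rfl
      · simp [IPrime] at h1
      · rw [typeLoad_special_one]
        simp [IPrime, hr3a]
  · have hr3none : f 𝒓₃ = none := by
      rcases h : f 𝒓₃ with _ | c
      · rfl
      · rcases college_of_r3 hM h with rfl | rfl <;> simp_all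
    refine hstab 𝒓₃ 3 ((I').blockingPair_of_replace hfeas hr2 (by simp [IPrime])
      (by simp [SMTI.PrefersTo, hr3none]) ?_ ?_ ?_)
    · simpa [IPrime] using hB.2 𝒓₃ 𝒓₂ (by simp [blockB])
    · intro z h1 h2
      rcases eq_special_type_of_tau (by decide) h1 with rfl | rfl <;> simp [IPrime] at h2
    · intro z h1 h2
      rcases eq_special_type_of_tau (by decide) h2 with rfl | rfl
      · rw [typeLoad_special_zero]
        simp [IPrime, hr2]
      · simp [IPrime] at h1

theorem r1_at_b (hM : (I').IsMatching f) (hfeas : (I').Feasible f) (hstab : (I').Stable f)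
    (hB : RealizesBlocks (blockB r s) rkB) : f 𝒓₁ = some 3 := by
  by_contra hr1
  have hr2 := r2_not_at_b hM hfeas hstab hB
  have hcard := card_assigned_b_le hM hfeas
  rw [typeLoad_special_zero, typeLoad_special_one] at hcard
  refine hstab 𝒓₁ 3 ((I').blockingPair_of_vacancy hfeas (by simp [IPrime]) ?_ ?_ ?_)
  · intro c hc
    rcases college_of_r1 hM hc with rfl | rfl
    · simp [IPrime]
    · exact absurd hc hr1
  · show _ < r + 2
    simp only [hr1, hr2, if_false] at hcard
    split_ifs at hcard <;> omega
  · intro z h1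
    rcases eq_special_type_of_tau (by decide) h1 with rfl | rfl
    · rw [typeLoad_special_zero]
      simp [IPrime, hr1, hr2]
    · simp [IPrime] at h1

theorem r3_at_b (hM : (I').IsMatching f) (hfeas : (I').Feasible f) (hstab : (I').Stable f)
    (hB : RealizesBlocks (blockB r s) rkB) : f 𝒓₃ = some 3 := by
  have hr1 := r1_at_b hM hfeas hstab hB
  have hr2 := r2_not_at_b hM hfeas hstab hB
  rcases h3 : f 𝒓₃ with _ | c
  · have hcard := card_assigned_b_le hM hfeas
    rw [typeLoad_special_zero, typeLoad_special_one] at hcard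
    refine (hstab 𝒓₃ 3 ((I').blockingPair_of_vacancy hfeas (by simp [IPrime])
      (by simp [SMTI.PrefersTo, h3]) ?_ ?_)).elim
    · show _ < r + 2
      simp only [hr1, hr2, h3, reduceCtorEq, if_true, if_false] at hcard
      omega
    · intro z h1
      rcases eq_special_type_of_tau (by decide) h1 with rfl | rfl
      · simp [IPrime] at h1
      · rw [typeLoad_special_one]
        simp [IPrime, h3, hr2]
  rcases college_of_r3 hM h3 with rfl | rfl
  · refine (hstab 𝒓₂ 3
      ((I').blockingPair_of_replace hfeas hr1 (by simp [IPrime]) ?_ ?_ ?_ ?_)).elim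
    · intro c hc
      rcases college_of_r2 hM hc with rfl | rfl | rfl
      · simp [IPrime]
      · simp [IPrime]
      · exact absurd hc hr2
    · simpa [IPrime] using hB.2 𝒓₂ 𝒓₁ (by simp [blockB])
    · intro z h1 h2
      rcases eq_special_type_of_tau (by decide) h1 with rfl | rfl
      · simp [IPrime] at h2
      · rw [typeLoad_special_one]
        simp [IPrime, h3, hr2]
    · intro z h1 h2
      rcases eq_special_type_of_tau (by decide) h2 with rfl | rfl <;> simp [IPrime] at h1
  · rfl

theorem r2_at_a (hM : (I').IsMatching f) (hfeas : (I').Feasible f) (hstab : (I').Stable f)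
    (hB : RealizesBlocks (blockB r s) rkB) : f 𝒓₂ = some 2 := by
  by_contra hr2
  have hr1 := r1_at_b hM hfeas hstab hB
  have hr3 := r3_at_b hM hfeas hstab hB
  have ha : ∀ u, f u ≠ some 2 := fun u hu => by
    rcases eq_r_of_at_a hM hu with rfl | rfl | rfl <;> simp_all
  refine hstab 𝒓₃ 2 ((I').blockingPair_of_preferred_to_all (by simp [IPrime])
    (by simp [SMTI.PrefersTo, hr3, IPrime]) (fun u hu => absurd hu (ha u)) (by simp [IPrime]) ?_)
  rintro ((_ | _) | (_ | t))
  all_goals try fin_cases t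
  all_goals simp [IPrime]

theorem d_at_w (hM : (I').IsMatching f) (hfeas : (I').Feasible f) (hstab : (I').Stable f)
    (hB : RealizesBlocks (blockB r s) rkB) : f 𝒅 = some 1 := by
  by_contra hd
  have hr2 := r2_at_a hM hfeas hstab hB
  have hw : ∀ u, f u ≠ some 1 := fun u hu => by
    rcases eq_d_or_r2_of_at_w hM hu with rfl | rfl <;> simp_all
  refine hstab 𝒓₂ 1 ((I').blockingPair_of_preferred_to_all (by simp [IPrime])
    (by simp [SMTI.PrefersTo, hr2, IPrime]) (fun u hu => absurd hu (hw u)) (by simp [IPrime]) ?_)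
  intro z
  simpa [IPrime] using Bool.toNat_le _

theorem x_literals_split (hfeas : (I').Feasible f) (hd : f 𝒅 = some 1) (i : Fin r) :
    (f (Sum.inl (true, Sum.inl i)) = some 0 ∧ f (Sum.inl (false, Sum.inl i)) = some 3) ∨
      (f (Sum.inl (false, Sum.inl i)) = some 0 ∧ f (Sum.inl (true, Sum.inl i)) = some 3) := by
  have hv := typeLoad_v_eq_quota hfeas (Sum.inl (Sum.inl i))
  have hb := typeLoad_b_xVar hfeas i
  rw [typeLoad_variable] at hv hb
  simp only [hd, Option.some.injEq, one_ne_zero, Fin.reduceEq, ↓reduceIte, add_zero,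
    quotaV] at hv hb
  split_ifs at hv hb <;> simp_all

theorem y_literal_at_v (hfeas : (I').Feasible f) (hd : f 𝒅 = some 1) (pol : Bool) (i : Fin r) :
    f (Sum.inl (pol, Sum.inr i)) = some 0 := by
  have hv := typeLoad_v_eq_quota hfeas (Sum.inl (Sum.inr i))
  rw [typeLoad_variable] at hv
  simp only [hd, Option.some.injEq, one_ne_zero, ↓reduceIte, add_zero, quotaV] at hv
  cases pol <;> split_ifs at hv <;> simp_all

theorem clause_student_at_v_iff {j : Fin s} (hinj : Function.Injective (cl j))
    (hfeas : (I').Feasible f) (hd : f 𝒅 = some 1) :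
    f (Sum.inr (Sum.inl j)) = some 0 ↔
      (Finset.univ.filter fun z : Fin 3 => f (Sum.inl (cl j z)) = some 0).card = 2 := by
  have hv := typeLoad_v_eq_quota hfeas (Sum.inr (Sum.inl j))
  rw [typeLoad_clause hinj] at hv
  simp only [hd, Option.some.injEq, one_ne_zero, ↓reduceIte, add_zero, quotaV] at hv
  split_ifs at hv with h <;> simp only [h, true_iff, false_iff] <;> omega

end IPrime

theorem stmt8_general (r s : ℕ) (cl : Fin s → Fin 3 → XLit r)
    (hdist : ∀ j : Fin s, Function.Injective (cl j))
    (rkV rkB : StP r s → ℕ)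
    (hB : RealizesBlocks (blockB r s) rkB)
    (f : StP r s → Option ColP)
    (hM : (IPrime r s cl rkV rkB).IsMatching f)
    (hfeas : (IPrime r s cl rkV rkB).Feasible f)
    (hstab : (IPrime r s cl rkV rkB).Stable f) :
    (∀ i : Fin r,
        (f (Sum.inl (true, Sum.inl i)) = some 0 ∧ f (Sum.inl (false, Sum.inl i)) = some 3) ∨
        (f (Sum.inl (false, Sum.inl i)) = some 0 ∧ f (Sum.inl (true, Sum.inl i)) = some 3)) ∧
    (f (Sum.inr (Sum.inr 0)) = some 1) ∧
    (∀ (pol : Bool) (i : Fin r), f (Sum.inl (pol, Sum.inr i)) = some 0) ∧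
    (∀ j : Fin s, f (Sum.inr (Sum.inl j)) = some 0 ↔
        (Finset.univ.filter fun z : Fin 3 => f (Sum.inl (cl j z)) = some 0).card = 2) := by
  have hd := IPrime.d_at_w hM hfeas hstab hB
  exact ⟨IPrime.x_literals_split hfeas hd, hd, IPrime.y_literal_at_v hfeas hd,
    fun j => IPrime.clause_student_at_v_iff (hdist j) hfeas hd⟩

/-- Every feasible and stable matching `f` of the instance `I'`
satisfies: (1) for each `i`, either `x_i` goes to `v` and `x̄_i` to `b`, or vice
versa; (2) `d` goes to `w`; (3) every `Y`-literal student goes to `v`; (4) the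
clause student `d_j` goes to `v` iff exactly two literal students of `C_j` go to `v`. -/
theorem stmt8 (r s : ℕ) (cl : Fin s → Fin 3 → XLit r)
    (hY : ∀ j : Fin s, 2 ≤ (Finset.univ.filter fun z : Fin 3 => (cl j z).2.isRight = true).card)
    (hdist : ∀ j : Fin s, Function.Injective (cl j))
    (rkV rkB : StP r s → ℕ)
    (hV : RealizesBlocks (blockV r s) rkV) (hB : RealizesBlocks (blockB r s) rkB)
    (f : StP r s → Option ColP)
    (hM : (IPrime r s cl rkV rkB).IsMatching f)
    (hfeas : (IPrime r s cl rkV rkB).Feasible f)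
    (hstab : (IPrime r s cl rkV rkB).Stable f) :
    (∀ i : Fin r,
        (f (Sum.inl (true, Sum.inl i)) = some 0 ∧ f (Sum.inl (false, Sum.inl i)) = some 3) ∨
        (f (Sum.inl (false, Sum.inl i)) = some 0 ∧ f (Sum.inl (true, Sum.inl i)) = some 3)) ∧
    (f (Sum.inr (Sum.inr 0)) = some 1) ∧
    (∀ (pol : Bool) (i : Fin r), f (Sum.inl (pol, Sum.inr i)) = some 0) ∧
    (∀ j : Fin s, f (Sum.inr (Sum.inl j)) = some 0 ↔
        (Finset.univ.filter fun z : Fin 3 => f (Sum.inl (cl j z)) = some 0).card = 2) :=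
  stmt8_general r s cl hdist rkV rkB hB f hM hfeas hstab
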